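/- arXiv:0907.4840 — 3 statements merged into one kernel-verified Lean document; each statement's English description precedes it below -/
import Mathlib

section
/- Let K be an algebraically closed field of characteristic p > 2 and let M ≥ m ≥ 1, N ≥ n ≥ 1. For every t ≥ 0, the evaluation homomorphism p_e maps the homogeneous component A_ns(M|N,t) of degree t of A_ns(M|N) onto the homogeneous component A_ns(m|n,t) of degree t of A_ns(m|n). -/
open MvPolynomial

noncomputable section

/-- The substitution `x_m = y_n = T`, landing in polynomials in `T` over the original ring
(the image only involves the remaining variables). -/
def psiSub (K : Type*) [CommSemiring K] (m n : ℕ) :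
    MvPolynomial (Fin m ⊕ Fin n) K →ₐ[K] Polynomial (MvPolynomial (Fin m ⊕ Fin n) K) :=
  MvPolynomial.aeval (Sum.elim
    (fun i : Fin m => if (i : ℕ) = m - 1 then Polynomial.X
      else Polynomial.C (MvPolynomial.X (Sum.inl i)))
    (fun j : Fin n => if (j : ℕ) = n - 1 then Polynomial.X
      else Polynomial.C (MvPolynomial.X (Sum.inr j))))

/-- `f` is supersymmetric: symmetric in the `x` and `y` variables separately, and
`(d/dT) f|_{x_m = y_n = T} = 0`. -/
def IsSupersymmetric (K : Type*) [CommSemiring K] (m n : ℕ)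
    (f : MvPolynomial (Fin m ⊕ Fin n) K) : Prop :=
  (∀ σ : Equiv.Perm (Fin m), MvPolynomial.rename (Sum.map σ id) f = f) ∧
  (∀ τ : Equiv.Perm (Fin n), MvPolynomial.rename (Sum.map id τ) f = f) ∧
  Polynomial.derivative (psiSub K m n f) = 0

/-- `c_r(x|y) = Σ_{i=0}^{min(r,m)} (−1)^{r−i} σ_i(x) h_{r−i}(y)`. -/
def cpoly (K : Type*) [CommRing K] (m n r : ℕ) : MvPolynomial (Fin m ⊕ Fin n) K :=
  ∑ i ∈ Finset.range (min r m + 1),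
    (-1 : MvPolynomial (Fin m ⊕ Fin n) K) ^ (r - i) *
      (MvPolynomial.rename Sum.inl (MvPolynomial.esymm (Fin m) K i)) *
      (MvPolynomial.rename Sum.inr (MvPolynomial.hsymm (Fin n) K (r - i)))

/-- σ_i(x_1,…,x_m), viewed in K[x_1,…,x_m,y_1,…,y_n]. -/
def sigmaX (K : Type*) [CommSemiring K] (m n i : ℕ) : MvPolynomial (Fin m ⊕ Fin n) K :=
  MvPolynomial.rename Sum.inl (MvPolynomial.esymm (Fin m) K i)

/-- σ_j(y_1,…,y_n), viewed in K[x_1,…,x_m,y_1,…,y_n]. -/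
def sigmaY (K : Type*) [CommSemiring K] (m n j : ℕ) : MvPolynomial (Fin m ⊕ Fin n) K :=
  MvPolynomial.rename Sum.inr (MvPolynomial.esymm (Fin n) K j)

/-- The generators of the algebra `A_ns(m|n)` of nice supersymmetric polynomials:
`c_r` (r ≥ 0), `σ_i(x)^p` (1 ≤ i ≤ m), `σ_j(y)^p` (1 ≤ j ≤ n) and
`u_k = σ_m(x)^k σ_n(y)^{p-k}` (0 < k < p). -/
def nsGens (K : Type*) [CommRing K] (p m n : ℕ) : Set (MvPolynomial (Fin m ⊕ Fin n) K) :=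
  {f | ∃ r : ℕ, f = cpoly K m n r} ∪
  {f | ∃ i : ℕ, 1 ≤ i ∧ i ≤ m ∧ f = (sigmaX K m n i) ^ p} ∪
  {f | ∃ j : ℕ, 1 ≤ j ∧ j ≤ n ∧ f = (sigmaY K m n j) ^ p} ∪
  {f | ∃ k : ℕ, 0 < k ∧ k < p ∧ f = (sigmaX K m n m) ^ k * (sigmaY K m n n) ^ (p - k)}

/-- The evaluation morphism `p_e` sending `x_i ↦ x_i` (i ≤ m), `y_j ↦ y_j` (j ≤ n) and the
remaining variables to `0`. -/
def pe (K : Type*) [CommSemiring K] (M N m n : ℕ) :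
    MvPolynomial (Fin M ⊕ Fin N) K →ₐ[K] MvPolynomial (Fin m ⊕ Fin n) K :=
  MvPolynomial.aeval (Sum.elim
    (fun i : Fin M => if h : (i : ℕ) < m then MvPolynomial.X (Sum.inl ⟨(i : ℕ), h⟩) else 0)
    (fun j : Fin N => if h : (j : ℕ) < n then MvPolynomial.X (Sum.inr ⟨(j : ℕ), h⟩) else 0))

end


/-!
Write `E_x(T) = ∏ (1 + x_i T)` and `E_y(T) = ∏ (1 + y_j T)`. The inverse of `E_y` is
`∏ (1 + y_j T)⁻¹ = ∑ (-1)^b h_b(y) T^b`, so `C(T) = ∑ c_r T^r = E_x E_y⁻¹`. These series are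
compatible with `p_e`, because the variables sent to `0` only contribute factors `1`, so `p_e`
sends `c_r` and `σ_i` to their namesakes. For `u_k`, `E_y^p C^k = E_x^k E_y^{p-k}` is a polynomial
of degree `≤ km + (p-k)n` with top coefficient `u_k`. In characteristic `p` the coefficients of
`E_y^p` are the `σ_j(y)^p`, so `u_k = [T^{km+(p-k)n}] (E_y^p C^k)` is a polynomial in the `c_r`
and `σ_j(y)^p`, given by a formula that makes sense in any number of variables and is respected
by `p_e`. Hence `p_e(A_ns(M|N)) = A_ns(m|n)`. Finally, `p_e` sends variables to variables or `0`,
so it commutes with taking homogeneous components, and `A_ns(M|N)`, being generated by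
homogeneous elements, contains the homogeneous components of its elements.
-/

open Finset
open scoped Polynomial

namespace MvPolynomial

variable {σ τ R : Type*} [CommSemiring R]

theorem esymm_isHomogeneous [Fintype σ] (n : ℕ) : (esymm σ R n).IsHomogeneous n := by
  refine IsHomogeneous.sum _ _ _ fun t ht => ?_
  simpa [(mem_powersetCard.mp ht).2] using
    IsHomogeneous.prod t _ (fun _ => 1) fun i _ => isHomogeneous_X R i

theorem isHomogeneous_multiset_prod_map_X (s : Multiset σ) :
    (s.map (X : σ → MvPolynomial σ R)).prod.IsHomogeneous (Multiset.card s) := by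
  induction s using Multiset.induction with
  | empty => simpa using isHomogeneous_one σ R
  | cons i s ih => simpa [add_comm] using (isHomogeneous_X R i).mul ih

theorem hsymm_isHomogeneous [Fintype σ] [DecidableEq σ] (n : ℕ) :
    (hsymm σ R n).IsHomogeneous n :=
  IsHomogeneous.sum _ _ _ fun s _ => by
    simpa using isHomogeneous_multiset_prod_map_X (R := R) (s : Multiset σ)

theorem homogeneousComponent_mem_adjoin {s : Set (MvPolynomial σ R)}
    (hs : ∀ f ∈ s, ∃ d, f.IsHomogeneous d) {f : MvPolynomial σ R} (hf : f ∈ Algebra.adjoin R s)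
    (t : ℕ) : homogeneousComponent t f ∈ Algebra.adjoin R s := by
  have hmon : ∀ g ∈ Submonoid.closure s, ∃ d, g.IsHomogeneous d := fun g hg => by
    induction hg using Submonoid.closure_induction with
    | mem g hg => exact hs g hg
    | one => exact ⟨0, isHomogeneous_one σ R⟩
    | mul a b _ _ ha hb =>
      obtain ⟨da, ha⟩ := ha
      obtain ⟨db, hb⟩ := hb
      exact ⟨da + db, ha.mul hb⟩
  rw [← Subalgebra.mem_toSubmodule, Algebra.adjoin_eq_span] at hf ⊢
  refine (Submodule.map_span_le (homogeneousComponent t) _ _).mpr (fun g hg => ?_) ⟨f, hf, rfl⟩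
  obtain ⟨d, hd⟩ := hmon g hg
  rw [homogeneousComponent_of_mem hd]
  split_ifs
  · exact Submodule.subset_span hg
  · exact zero_mem _

section DegreePreserving

variable (φ : MvPolynomial σ R →ₐ[R] MvPolynomial τ R) (hφ : ∀ i, (φ (X i)).IsHomogeneous 1)
include hφ

theorem IsHomogeneous.map_of_isHomogeneous_X {f : MvPolynomial σ R} {t : ℕ}
    (hf : f.IsHomogeneous t) : (φ f).IsHomogeneous t := by
  rw [aeval_unique φ]
  simpa using hf.aeval (φ ∘ X) hφ

theorem map_homogeneousComponent_of_isHomogeneous_X (t : ℕ) (f : MvPolynomial σ R) :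
    φ (homogeneousComponent t f) = homogeneousComponent t (φ f) := by
  induction f using MvPolynomial.induction_on' with
  | monomial d c =>
    have hd := isHomogeneous_monomial c (rfl : d.degree = d.degree)
    rw [homogeneousComponent_of_mem hd,
      homogeneousComponent_of_mem (hd.map_of_isHomogeneous_X φ hφ)]
    split_ifs <;> simp
  | add f g hf hg => simp only [map_add, hf, hg]

theorem image_adjoin_inter_isHomogeneous {s : Set (MvPolynomial σ R)}
    (hs : ∀ f ∈ s, ∃ d, f.IsHomogeneous d) (t : ℕ) :
    φ '' {f | f ∈ Algebra.adjoin R s ∧ f.IsHomogeneous t} =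
      {g | g ∈ (Algebra.adjoin R s).map φ ∧ g.IsHomogeneous t} := by
  ext g
  constructor
  · rintro ⟨f, ⟨hf, hft⟩, rfl⟩
    exact ⟨⟨f, hf, rfl⟩, hft.map_of_isHomogeneous_X φ hφ⟩
  · rintro ⟨⟨f, hf, rfl⟩, hgt⟩
    refine ⟨homogeneousComponent t f, ⟨homogeneousComponent_mem_adjoin hs hf t,
      homogeneousComponent_isHomogeneous t f⟩, ?_⟩
    rw [map_homogeneousComponent_of_isHomogeneous_X φ hφ]
    exact homogeneousComponent_eq_self hgt

end DegreePreserving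

end MvPolynomial

namespace Polynomial

variable {ι κ A B : Type*} [Fintype ι] [Fintype κ] [CommRing A] [CommRing B]

noncomputable def esymmGen (v : ι → A) : A[X] := ∏ i, (1 + C (v i) * X)

theorem coeff_esymmGen (v : ι → A) (j : ℕ) :
    (esymmGen v).coeff j = ∑ t ∈ powersetCard j univ, ∏ i ∈ t, v i := by
  simp only [esymmGen, prod_one_add, prod_mul_distrib, ← map_prod, prod_const, finsetSum_coeff,
    coeff_C_mul_X_pow, powersetCard_eq_filter, sum_filter, eq_comm (a := j)]

theorem natDegree_esymmGen_le (v : ι → A) : (esymmGen v).natDegree ≤ Fintype.card ι := by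
  rw [natDegree_le_iff_coeff_eq_zero]
  intro j hj
  rw [coeff_esymmGen, powersetCard_eq_empty.mpr (by simpa using hj), sum_empty]

theorem map_esymmGen (f : A →+* B) (v : ι → A) : (esymmGen v).map f = esymmGen (f ∘ v) := by
  simp [esymmGen, Polynomial.map_prod]

theorem esymmGen_eq_of_injective {e : κ → ι} (he : e.Injective) {v : ι → A} {w : κ → A}
    (hv : ∀ i ∉ Set.range e, v i = 0) (hvw : ∀ j, v (e j) = w j) : esymmGen v = esymmGen w :=
  (Fintype.prod_of_injective e he _ _ (fun i hi => by simp [hv i hi])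
    (fun j => by simp [hvw j])).symm

end Polynomial

namespace PowerSeries

variable {ι κ A B : Type*} [Fintype ι] [Fintype κ] [CommRing A] [CommRing B]

noncomputable def hsymmGen (v : ι → A) : A⟦X⟧ := ∏ i, rescale (v i) (mk 1)

theorem coeff_hsymmGen [DecidableEq ι] (v : ι → A) (j : ℕ) :
    coeff j (hsymmGen v) = ∑ s : Sym ι j, ((s : Multiset ι).map v).prod := by
  simp only [hsymmGen, coeff_prod, coeff_rescale, coeff_mk, Pi.one_apply, mul_one]
  have := Fintype.ofEquiv _ (Sym.equivNatSum ι j)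
  rw [sum_subtype _ (p := fun P : ι →₀ ℕ => P.sum (fun _ => id) = j)
    (fun P => by simp [mem_finsuppAntidiag, Finsupp.sum_fintype])]
  refine Fintype.sum_equiv (Sym.equivNatSum ι j).symm _ _ fun P => ?_
  rw [Sym.coe_equivNatSum_symm_apply, Finsupp.toMultiset_map, Finsupp.prod_toMultiset,
    Finsupp.prod_mapDomain_index (by simp) (by simp [pow_add]),
    Finsupp.prod_fintype _ _ (by simp)]

theorem map_hsymmGen (f : A →+* B) (v : ι → A) : map f (hsymmGen v) = hsymmGen (f ∘ v) := by
  have : map f (mk 1) = mk 1 := by ext; simp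
  simp [hsymmGen, ← rescale_map, this]

theorem hsymmGen_eq_of_injective {e : κ → ι} (he : e.Injective) {v : ι → A} {w : κ → A}
    (hv : ∀ i ∉ Set.range e, v i = 0) (hvw : ∀ j, v (e j) = w j) : hsymmGen v = hsymmGen w :=
  (Fintype.prod_of_injective e he _ _ (fun i hi => by simp [hv i hi])
    (fun j => by simp [hvw j])).symm

theorem esymmGen_mul_hsymmGen_neg (v : ι → A) :
    (Polynomial.esymmGen v : A⟦X⟧) * hsymmGen (-v) = 1 := by
  rw [Polynomial.esymmGen, ← Polynomial.coeToPowerSeries.ringHom_apply, map_prod, hsymmGen,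
    ← prod_mul_distrib]
  refine Fintype.prod_eq_one _ fun i => ?_
  have h := congrArg (rescale (-v i)) (mk_one_mul_one_sub_eq_one (S := A))
  rw [map_mul, map_sub, rescale_X, map_one, mul_comm] at h
  simpa [Polynomial.coeToPowerSeries.ringHom_apply] using h

theorem coeff_mul_pow_mem {T : Subring A} {f g : A⟦X⟧} (hf : ∀ n, coeff n f ∈ T)
    (hg : ∀ n, coeff n g ∈ T) (k d : ℕ) : coeff d (f * g ^ k) ∈ T := by
  rw [← map_toSubring f T hf, ← map_toSubring g T hg, ← map_pow, ← map_mul, coeff_map]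
  exact SetLike.coe_mem _

end PowerSeries

open Polynomial (esymmGen)
open PowerSeries (hsymmGen)

section GeneratingSeries

variable (K : Type*) [CommRing K] (p m n : ℕ)

noncomputable def esymmGenX : (MvPolynomial (Fin m ⊕ Fin n) K)[X] :=
  esymmGen fun i : Fin m => X (Sum.inl i)

noncomputable def esymmGenY : (MvPolynomial (Fin m ⊕ Fin n) K)[X] :=
  esymmGen fun j : Fin n => X (Sum.inr j)

noncomputable def esymmGenYInv : PowerSeries (MvPolynomial (Fin m ⊕ Fin n) K) :=
  hsymmGen fun j : Fin n => -X (Sum.inr j)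

noncomputable def cSeries : PowerSeries (MvPolynomial (Fin m ⊕ Fin n) K) :=
  PowerSeries.mk (cpoly K m n)

/-- For `d = km + (p-k)n` this is `u_k(m|n)`. The index `d` is kept free because the same `d`
with more variables gives a preimage of `u_k(m|n)` under `p_e`. -/
noncomputable def uLift (d k : ℕ) : MvPolynomial (Fin m ⊕ Fin n) K :=
  PowerSeries.coeff d (↑(esymmGenY K m n ^ p) * cSeries K m n ^ k)

theorem coeff_esymmGenX (i : ℕ) : (esymmGenX K m n).coeff i = sigmaX K m n i := by
  simp [esymmGenX, Polynomial.coeff_esymmGen, sigmaX, esymm, map_sum, map_prod]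

theorem coeff_esymmGenY (j : ℕ) : (esymmGenY K m n).coeff j = sigmaY K m n j := by
  simp [esymmGenY, Polynomial.coeff_esymmGen, sigmaY, esymm, map_sum, map_prod]

theorem natDegree_esymmGenX_le : (esymmGenX K m n).natDegree ≤ m :=
  (Polynomial.natDegree_esymmGen_le _).trans_eq (Fintype.card_fin m)

theorem natDegree_esymmGenY_le : (esymmGenY K m n).natDegree ≤ n :=
  (Polynomial.natDegree_esymmGen_le _).trans_eq (Fintype.card_fin n)

theorem sigmaX_eq_zero {i : ℕ} (hi : m < i) : sigmaX K m n i = 0 := by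
  rw [← coeff_esymmGenX]
  exact Polynomial.coeff_eq_zero_of_natDegree_lt ((natDegree_esymmGenX_le K m n).trans_lt hi)

theorem sigmaY_eq_zero {j : ℕ} (hj : n < j) : sigmaY K m n j = 0 := by
  rw [← coeff_esymmGenY]
  exact Polynomial.coeff_eq_zero_of_natDegree_lt ((natDegree_esymmGenY_le K m n).trans_lt hj)

theorem esymmGenY_mul_esymmGenYInv : (esymmGenY K m n : PowerSeries _) * esymmGenYInv K m n = 1 :=
  PowerSeries.esymmGen_mul_hsymmGen_neg _

theorem coeff_esymmGenYInv (b : ℕ) :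
    PowerSeries.coeff b (esymmGenYInv K m n) = (-1) ^ b * rename Sum.inr (hsymm (Fin n) K b) := by
  simp only [esymmGenYInv, PowerSeries.coeff_hsymmGen, hsymm, map_sum, map_multiset_prod,
    Multiset.map_map, mul_sum]
  refine Fintype.sum_congr _ _ fun s => ?_
  rw [show (fun j : Fin n => -(X (Sum.inr j) : MvPolynomial (Fin m ⊕ Fin n) K)) =
    Neg.neg ∘ fun j => X (Sum.inr j) from rfl, ← Multiset.map_map, Multiset.prod_map_neg,
    Multiset.card_map, Sym.card_coe]
  simp [Function.comp_def]

theorem cSeries_eq : cSeries K m n = esymmGenX K m n * esymmGenYInv K m n := by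
  refine PowerSeries.ext fun r => ?_
  rw [cSeries, PowerSeries.coeff_mk, PowerSeries.coeff_mul,
    Nat.sum_antidiagonal_eq_sum_range_succ_mk, cpoly]
  simp only [Polynomial.coeff_coe, coeff_esymmGenX, coeff_esymmGenYInv]
  rw [← sum_subset (range_subset_range.mpr (by omega : min r m + 1 ≤ r + 1))]
  · exact sum_congr rfl fun i _ => by rw [sigmaX]; ring
  · intro i hi hi'
    simp only [mem_range] at hi hi'
    rw [sigmaX_eq_zero K m n (by omega), zero_mul]

theorem esymmGenY_pow_mul_cSeries_pow {k : ℕ} (hk : k ≤ p) :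
    ↑(esymmGenY K m n ^ p) * cSeries K m n ^ k =
      ↑(esymmGenX K m n ^ k * esymmGenY K m n ^ (p - k)) := by
  have hGH := esymmGenY_mul_esymmGenYInv K m n
  rw [cSeries_eq]
  push_cast
  calc _ = (esymmGenX K m n : PowerSeries _) ^ k * (esymmGenY K m n : PowerSeries _) ^ (p - k) *
        ((esymmGenY K m n : PowerSeries _) * esymmGenYInv K m n) ^ k := by
        conv_lhs => rw [← Nat.sub_add_cancel hk]
        ring
    _ = _ := by rw [hGH, one_pow, mul_one]

theorem coeff_esymmGenX_pow_mul_esymmGenY_pow (k l : ℕ) :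
    (esymmGenX K m n ^ k * esymmGenY K m n ^ l).coeff (k * m + l * n) =
      sigmaX K m n m ^ k * sigmaY K m n n ^ l := by
  rw [Polynomial.coeff_mul_add_eq_of_natDegree_le
      (Polynomial.natDegree_pow_le_of_le k (natDegree_esymmGenX_le K m n))
      (Polynomial.natDegree_pow_le_of_le l (natDegree_esymmGenY_le K m n)),
    Polynomial.coeff_pow_of_natDegree_le (natDegree_esymmGenX_le K m n),
    Polynomial.coeff_pow_of_natDegree_le (natDegree_esymmGenY_le K m n),
    coeff_esymmGenX, coeff_esymmGenY]

theorem sigmaX_pow_mul_sigmaY_pow_eq_uLift {k : ℕ} (hk : k ≤ p) :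
    sigmaX K m n m ^ k * sigmaY K m n n ^ (p - k) = uLift K p m n (k * m + (p - k) * n) k := by
  rw [uLift, esymmGenY_pow_mul_cSeries_pow K p m n hk, Polynomial.coeff_coe,
    coeff_esymmGenX_pow_mul_esymmGenY_pow]

end GeneratingSeries

section Restriction

variable {K : Type*} [CommRing K] {M N m n : ℕ}

theorem pe_X_inl (i : Fin M) : pe K M N m n (X (Sum.inl i)) =
    if h : (i : ℕ) < m then X (Sum.inl ⟨i, h⟩) else 0 := by
  simp [pe]

theorem pe_X_inr (j : Fin N) : pe K M N m n (X (Sum.inr j)) =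
    if h : (j : ℕ) < n then X (Sum.inr ⟨j, h⟩) else 0 := by
  simp [pe]

theorem pe_X_isHomogeneous (i : Fin M ⊕ Fin N) : (pe K M N m n (X i)).IsHomogeneous 1 := by
  rcases i with i | j
  · rw [pe_X_inl]; split_ifs <;> simp [isHomogeneous_X, isHomogeneous_zero]
  · rw [pe_X_inr]; split_ifs <;> simp [isHomogeneous_X, isHomogeneous_zero]

theorem map_pe_esymmGenX (hM : m ≤ M) :
    (esymmGenX K M N).map (pe K M N m n) = esymmGenX K m n := by
  rw [esymmGenX, Polynomial.map_esymmGen]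
  refine Polynomial.esymmGen_eq_of_injective (Fin.castLE_injective hM) (fun i hi => ?_)
    fun i => by simp [pe_X_inl]
  simp only [Fin.range_castLE, Set.mem_ofPred_eq, not_lt] at hi
  simp [pe_X_inl, hi]

theorem map_pe_esymmGenY (hN : n ≤ N) :
    (esymmGenY K M N).map (pe K M N m n) = esymmGenY K m n := by
  rw [esymmGenY, Polynomial.map_esymmGen]
  refine Polynomial.esymmGen_eq_of_injective (Fin.castLE_injective hN) (fun j hj => ?_)
    fun j => by simp [pe_X_inr]
  simp only [Fin.range_castLE, Set.mem_ofPred_eq, not_lt] at hj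
  simp [pe_X_inr, hj]

theorem map_pe_esymmGenYInv (hN : n ≤ N) :
    PowerSeries.map
      (pe K M N m n : MvPolynomial (Fin M ⊕ Fin N) K →+* MvPolynomial (Fin m ⊕ Fin n) K)
      (esymmGenYInv K M N) = esymmGenYInv K m n := by
  rw [esymmGenYInv, PowerSeries.map_hsymmGen]
  refine PowerSeries.hsymmGen_eq_of_injective (Fin.castLE_injective hN) (fun j hj => ?_)
    fun j => by simp [pe_X_inr]
  simp only [Fin.range_castLE, Set.mem_ofPred_eq, not_lt] at hj
  simp [pe_X_inr, hj]

theorem map_pe_cSeries (hM : m ≤ M) (hN : n ≤ N) :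
    PowerSeries.map
      (pe K M N m n : MvPolynomial (Fin M ⊕ Fin N) K →+* MvPolynomial (Fin m ⊕ Fin n) K)
      (cSeries K M N) = cSeries K m n := by
  rw [cSeries_eq, cSeries_eq, map_mul, ← Polynomial.polynomial_map_coe, map_pe_esymmGenX hM,
    map_pe_esymmGenYInv hN]

theorem pe_sigmaX (hM : m ≤ M) (i : ℕ) : pe K M N m n (sigmaX K M N i) = sigmaX K m n i := by
  simpa [coeff_esymmGenX] using
    congrArg (·.coeff i) (map_pe_esymmGenX (K := K) (N := N) (n := n) hM)

theorem pe_sigmaY (hN : n ≤ N) (j : ℕ) : pe K M N m n (sigmaY K M N j) = sigmaY K m n j := by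
  simpa [coeff_esymmGenY] using
    congrArg (·.coeff j) (map_pe_esymmGenY (K := K) (M := M) (m := m) hN)

theorem pe_cpoly (hM : m ≤ M) (hN : n ≤ N) (r : ℕ) :
    pe K M N m n (cpoly K M N r) = cpoly K m n r := by
  simpa [cSeries] using congrArg (PowerSeries.coeff r) (map_pe_cSeries hM hN)

theorem pe_uLift (hM : m ≤ M) (hN : n ≤ N) (p d k : ℕ) :
    pe K M N m n (uLift K p M N d k) = uLift K p m n d k := by
  rw [uLift, uLift, ← map_pe_cSeries hM hN, ← map_pe_esymmGenY hN, ← Polynomial.map_pow,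
    Polynomial.polynomial_map_coe, ← map_pow, ← map_mul, PowerSeries.coeff_map]
  rfl

end Restriction

section Generators

variable (K : Type*) [CommRing K] (p m n : ℕ)

theorem cpoly_isHomogeneous (r : ℕ) : (cpoly K m n r).IsHomogeneous r := by
  refine IsHomogeneous.sum _ _ _ fun i hi => ?_
  have hir : i ≤ r := by simp only [mem_range] at hi; omega
  have h := (((isHomogeneous_one (Fin m ⊕ Fin n) K).neg.pow (r - i)).mul
    ((esymm_isHomogeneous i).rename_isHomogeneous (f := Sum.inl))).mul
    ((hsymm_isHomogeneous (r - i)).rename_isHomogeneous (f := Sum.inr))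
  rwa [zero_mul, zero_add, Nat.add_sub_cancel' hir] at h

theorem isHomogeneous_of_mem_nsGens : ∀ f ∈ nsGens K p m n, ∃ d, f.IsHomogeneous d := by
  have hX (i : ℕ) : (sigmaX K m n i).IsHomogeneous i :=
    (esymm_isHomogeneous i).rename_isHomogeneous
  have hY (j : ℕ) : (sigmaY K m n j).IsHomogeneous j :=
    (esymm_isHomogeneous j).rename_isHomogeneous
  rintro f (((⟨r, rfl⟩ | ⟨i, -, -, rfl⟩) | ⟨j, -, -, rfl⟩) | ⟨k, -, -, rfl⟩)
  · exact ⟨r, cpoly_isHomogeneous K m n r⟩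
  · exact ⟨_, (hX i).pow p⟩
  · exact ⟨_, (hY j).pow p⟩
  · exact ⟨_, ((hX m).pow k).mul ((hY n).pow (p - k))⟩

theorem cpoly_mem_adjoin_nsGens (r : ℕ) : cpoly K m n r ∈ Algebra.adjoin K (nsGens K p m n) :=
  Algebra.subset_adjoin (Or.inl (Or.inl (Or.inl ⟨r, rfl⟩)))

theorem sigmaX_pow_mem_adjoin_nsGens (i : ℕ) :
    sigmaX K m n i ^ p ∈ Algebra.adjoin K (nsGens K p m n) := by
  rcases Nat.eq_zero_or_pos i with rfl | hi
  · rw [show sigmaX K m n 0 = 1 by simp [sigmaX], one_pow]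
    exact one_mem _
  rcases le_or_gt i m with him | him
  · exact Algebra.subset_adjoin (Or.inl (Or.inl (Or.inr ⟨i, hi, him, rfl⟩)))
  · rw [sigmaX_eq_zero K m n him]
    exact pow_mem (zero_mem _) p

theorem sigmaY_pow_mem_adjoin_nsGens (j : ℕ) :
    sigmaY K m n j ^ p ∈ Algebra.adjoin K (nsGens K p m n) := by
  rcases Nat.eq_zero_or_pos j with rfl | hj
  · rw [show sigmaY K m n 0 = 1 by simp [sigmaY], one_pow]
    exact one_mem _
  rcases le_or_gt j n with hjn | hjn
  · exact Algebra.subset_adjoin (Or.inl (Or.inr ⟨j, hj, hjn, rfl⟩))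
  · rw [sigmaY_eq_zero K m n hjn]
    exact pow_mem (zero_mem _) p

variable [CharP K p] [Fact p.Prime]

theorem coeff_esymmGenY_pow_mem_adjoin_nsGens (d : ℕ) :
    (esymmGenY K m n ^ p).coeff d ∈ Algebra.adjoin K (nsGens K p m n) := by
  rw [← Polynomial.map_frobenius_expand p, Polynomial.coeff_map,
    Polynomial.coeff_expand (Fact.out : p.Prime).pos]
  split_ifs
  · rw [frobenius_def, coeff_esymmGenY]
    exact sigmaY_pow_mem_adjoin_nsGens K p m n _
  · rw [map_zero]
    exact zero_mem _

theorem uLift_mem_adjoin_nsGens (d k : ℕ) :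
    uLift K p m n d k ∈ Algebra.adjoin K (nsGens K p m n) :=
  PowerSeries.coeff_mul_pow_mem (T := (Algebra.adjoin K (nsGens K p m n)).toSubring)
    (fun e => by
      rw [Polynomial.coeff_coe]
      exact coeff_esymmGenY_pow_mem_adjoin_nsGens K p m n e)
    (fun r => by
      rw [cSeries, PowerSeries.coeff_mk]
      exact cpoly_mem_adjoin_nsGens K p m n r) k d

end Generators

section Adjoin

variable {K : Type*} [CommRing K] [IsDomain K] {p M N m n : ℕ} [CharP K p]

theorem pe_mem_adjoin_nsGens (hM : m ≤ M) (hN : n ≤ N) {f : MvPolynomial (Fin M ⊕ Fin N) K}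
    (hf : f ∈ nsGens K p M N) : pe K M N m n f ∈ Algebra.adjoin K (nsGens K p m n) := by
  rcases hf with ((⟨r, rfl⟩ | ⟨i, -, -, rfl⟩) | ⟨j, -, -, rfl⟩) | ⟨k, -, hkp, rfl⟩
  · rw [pe_cpoly hM hN]
    exact cpoly_mem_adjoin_nsGens K p m n r
  · rw [map_pow, pe_sigmaX hM]
    exact sigmaX_pow_mem_adjoin_nsGens K p m n i
  · rw [map_pow, pe_sigmaY hN]
    exact sigmaY_pow_mem_adjoin_nsGens K p m n j
  · have : NeZero p := ⟨by omega⟩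
    have := CharP.char_is_prime_of_pos K p
    rw [sigmaX_pow_mul_sigmaY_pow_eq_uLift K p M N hkp.le, pe_uLift hM hN]
    exact uLift_mem_adjoin_nsGens K p m n _ k

theorem mem_map_pe_adjoin_nsGens (hM : m ≤ M) (hN : n ≤ N) {g : MvPolynomial (Fin m ⊕ Fin n) K}
    (hg : g ∈ nsGens K p m n) : g ∈ (Algebra.adjoin K (nsGens K p M N)).map (pe K M N m n) := by
  rcases hg with ((⟨r, rfl⟩ | ⟨i, -, -, rfl⟩) | ⟨j, -, -, rfl⟩) | ⟨k, -, hkp, rfl⟩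
  · exact ⟨_, cpoly_mem_adjoin_nsGens K p M N r, pe_cpoly hM hN r⟩
  · exact ⟨_, sigmaX_pow_mem_adjoin_nsGens K p M N i, by simp [pe_sigmaX hM]⟩
  · exact ⟨_, sigmaY_pow_mem_adjoin_nsGens K p M N j, by simp [pe_sigmaY hN]⟩
  · have : NeZero p := ⟨by omega⟩
    have := CharP.char_is_prime_of_pos K p
    rw [sigmaX_pow_mul_sigmaY_pow_eq_uLift K p m n hkp.le]
    exact ⟨_, uLift_mem_adjoin_nsGens K p M N _ k, pe_uLift hM hN p _ k⟩

theorem map_pe_adjoin_nsGens (hM : m ≤ M) (hN : n ≤ N) :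
    (Algebra.adjoin K (nsGens K p M N)).map (pe K M N m n) =
      Algebra.adjoin K (nsGens K p m n) :=
  le_antisymm
    (Subalgebra.map_le.mpr (Algebra.adjoin_le fun _ hf => pe_mem_adjoin_nsGens hM hN hf))
    (Algebra.adjoin_le fun _ hg => mem_map_pe_adjoin_nsGens hM hN hg)

end Adjoin

theorem pe_maps_Ans_component_onto_general (K : Type*) [Field K]
    (p : ℕ) [CharP K p] (M N m n : ℕ)
    (hM : m ≤ M) (hN : n ≤ N) (t : ℕ) :
    (pe K M N m n) ''
        {f | f ∈ Algebra.adjoin K (nsGens K p M N) ∧ f.IsHomogeneous t} =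
      {g | g ∈ Algebra.adjoin K (nsGens K p m n) ∧ g.IsHomogeneous t} := by
  rw [image_adjoin_inter_isHomogeneous _ pe_X_isHomogeneous
    (isHomogeneous_of_mem_nsGens K p M N) t, map_pe_adjoin_nsGens hM hN]

/-- **Corollary 1.2.** For every `t ≥ 0`, the evaluation morphism `p_e` maps the homogeneous
component `A_ns(M|N,t)` onto the homogeneous component `A_ns(m|n,t)`. -/
theorem pe_maps_Ans_component_onto (K : Type*) [Field K] [IsAlgClosed K]
    (p : ℕ) [CharP K p] (hp : 2 < p) (M N m n : ℕ)
    (hm : 1 ≤ m) (hn : 1 ≤ n) (hM : m ≤ M) (hN : n ≤ N) (t : ℕ) :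
    (pe K M N m n) ''
        {f | f ∈ Algebra.adjoin K (nsGens K p M N) ∧ f.IsHomogeneous t} =
      {g | g ∈ Algebra.adjoin K (nsGens K p m n) ∧ g.IsHomogeneous t} :=
  pe_maps_Ans_component_onto_general K p M N m n hM hN t
end

section
/- Let K be an algebraically closed field of characteristic p > 2 and m, n ≥ 1. The algebra A_s(m|n) of supersymmetric polynomials contains the subalgebra B' = K[σ_1(x)^p,…,σ_m(x)^p, σ_1(y)^p,…,σ_n(y)^p] and is a finitely generated B'-module. -/
open MvPolynomial

/-!
In characteristic `p` the Frobenius map turns `∏ⱼ (T - xⱼ)` into `∏ⱼ (T - xⱼ^p)`, whose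
coefficients `± σᵣ(x)^p` lie in `B'`; so every `xᵢ^p`, hence every `xᵢ`, is integral over `B'`,
and likewise every `yⱼ`. The polynomial ring is therefore a finite module over `B'`, which is
noetherian as a finitely generated `K`-algebra, so its `B'`-submodule `A_s(m|n)` is finitely
generated. The inclusion `B' ⊆ A_s(m|n)` holds because `p`-th powers have zero derivative.
-/

namespace Multiset

variable {R : Type*} [CommRing R]

theorem map_esymm {S : Type*} [CommRing S] (f : R →+* S) (s : Multiset R) (k : ℕ) :
    f (s.esymm k) = (s.map f).esymm k := by
  simp only [esymm, map_multiset_sum, powersetCard_map, Multiset.map_map, Function.comp_def,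
    map_multiset_prod]

theorem isIntegral_of_esymm_mem {K : Type*} [CommRing K] [Algebra K R] [Nontrivial R]
    (S : Subalgebra K R) (s : Multiset R) (hs : ∀ r, 0 < r → r ≤ card s → s.esymm r ∈ S)
    {x : R} (hx : x ∈ s) : IsIntegral S x := by
  set Q := (s.map fun t => Polynomial.X - Polynomial.C t).prod
  have hcoeff : ∀ k, Q.coeff k ∈ S := by
    intro k
    rcases le_or_gt k (card s) with hk | hk
    · rw [prod_X_sub_C_coeff s hk]
      refine S.mul_mem (S.pow_mem (S.neg_mem S.one_mem) _) ?_
      rcases Nat.eq_zero_or_pos (card s - k) with h0 | hpos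
      · rw [h0, esymm, powersetCard_zero_left]
        simp
      · exact hs _ hpos (Nat.sub_le _ _)
    · rw [Polynomial.coeff_eq_zero_of_natDegree_lt
        (by rwa [Polynomial.natDegree_multiset_prod_X_sub_C_eq_card])]
      exact S.zero_mem
  have hmonic : Q.Monic :=
    Polynomial.monic_multiset_prod_of_monic _ _ fun t _ => Polynomial.monic_X_sub_C t
  have hlifts : Q ∈ Polynomial.lifts (algebraMap S R) :=
    (Polynomial.lifts_iff_coeff_lifts Q).2 fun k => ⟨⟨_, hcoeff k⟩, rfl⟩
  obtain ⟨q, hq, -, hqm⟩ := Polynomial.lifts_and_degree_eq_and_monic hlifts hmonic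
  refine ⟨q, hqm, ?_⟩
  rw [Polynomial.eval₂_eq_eval_map, hq, Polynomial.eval_multiset_prod]
  exact prod_eq_zero (mem_map.2 ⟨_, mem_map.2 ⟨x, hx, rfl⟩, by simp⟩)

theorem isIntegral_of_esymm_pow_mem {K : Type*} [CommRing K] [Algebra K R] [Nontrivial R]
    {p : ℕ} [ExpChar R p] (S : Subalgebra K R) (s : Multiset R)
    (hs : ∀ r, 0 < r → r ≤ card s → s.esymm r ^ p ∈ S) {x : R} (hx : x ∈ s) :
    IsIntegral S x := by
  refine IsIntegral.of_pow (expChar_pos R p) (isIntegral_of_esymm_mem S (s.map (frobenius R p))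
    (fun r hr hrs => ?_) (mem_map_of_mem _ hx))
  rw [← map_esymm, frobenius_def]
  exact hs r hr (by simpa using hrs)

end Multiset

theorem Module.Finite.of_adjoin_eq_top_of_isIntegral {K R : Type*} [CommRing K] [CommRing R]
    [Algebra K R] (B : Subalgebra K R) {s : Set R} (hs : s.Finite)
    (hgen : Algebra.adjoin K s = ⊤) (hint : ∀ x ∈ s, IsIntegral B x) : Module.Finite B R := by
  have htop : Algebra.adjoin B s = ⊤ := by
    refine eq_top_iff.2 fun x _ => ?_
    have hle : Algebra.adjoin K s ≤ (Algebra.adjoin B s).restrictScalars K :=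
      Algebra.adjoin_le Algebra.subset_adjoin
    exact hle (hgen ▸ Algebra.mem_top)
  rw [Module.finite_def, ← Algebra.top_toSubmodule, ← htop]
  exact fg_adjoin_of_finite hs hint

theorem Subalgebra.exists_finset_span_of_le {K R : Type*} [CommRing K] [CommRing R]
    [Algebra K R] {B C : Subalgebra K R} (hBC : B ≤ C) [IsNoetherian B R] :
    ∃ S : Finset R, (S : Set R) ⊆ C ∧ ∀ f ∈ C, f ∈ Submodule.span B (S : Set R) := by
  let M : Submodule B R :=
    { carrier := C
      add_mem' := C.add_mem
      zero_mem' := C.zero_mem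
      smul_mem' := fun b _ hf => C.mul_mem (hBC b.2) hf }
  obtain ⟨S, hS⟩ := IsNoetherian.noetherian M
  refine ⟨S, fun f hf => ?_, fun f hf => ?_⟩
  · exact (hS ▸ Submodule.subset_span hf : f ∈ M)
  · rw [hS]
    exact hf

noncomputable section Supersymmetric

variable (K : Type*) [CommRing K] (p m n : ℕ)

def supersymmetricSubalgebra : Subalgebra K (MvPolynomial (Fin m ⊕ Fin n) K) where
  carrier := {f | IsSupersymmetric K m n f}
  mul_mem' := by
    rintro f g ⟨hf₁, hf₂, hf₃⟩ ⟨hg₁, hg₂, hg₃⟩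
    refine ⟨fun σ => by rw [map_mul, hf₁, hg₁], fun τ => by rw [map_mul, hf₂, hg₂], ?_⟩
    rw [map_mul, Polynomial.derivative_mul, hf₃, hg₃, mul_zero, zero_mul, add_zero]
  add_mem' := by
    rintro f g ⟨hf₁, hf₂, hf₃⟩ ⟨hg₁, hg₂, hg₃⟩
    refine ⟨fun σ => by rw [map_add, hf₁, hg₁], fun τ => by rw [map_add, hf₂, hg₂], ?_⟩
    rw [map_add, map_add, hf₃, hg₃, add_zero]
  algebraMap_mem' c := ⟨fun _ => AlgHom.commutes _ c, fun _ => AlgHom.commutes _ c, by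
    rw [AlgHom.commutes, Polynomial.algebraMap_apply, Polynomial.derivative_C]⟩

def sigmaPowSubalgebra : Subalgebra K (MvPolynomial (Fin m ⊕ Fin n) K) :=
  Algebra.adjoin K ({f | ∃ i : ℕ, 1 ≤ i ∧ i ≤ m ∧ f = (sigmaX K m n i) ^ p} ∪
    {f | ∃ j : ℕ, 1 ≤ j ∧ j ≤ n ∧ f = (sigmaY K m n j) ^ p})

variable {K p m n}

theorem isSupersymmetric_pow_char [CharP K p] {f : MvPolynomial (Fin m ⊕ Fin n) K}
    (hf : ∀ (σ : Equiv.Perm (Fin m)) (τ : Equiv.Perm (Fin n)), rename (Sum.map σ τ) f = f) :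
    IsSupersymmetric K m n (f ^ p) := by
  refine ⟨fun σ => ?_, fun τ => ?_, ?_⟩
  · rw [map_pow, ← Equiv.Perm.coe_one, hf]
  · rw [map_pow, ← Equiv.Perm.coe_one, hf]
  · rw [map_pow, Polynomial.derivative_pow, CharP.cast_eq_zero, map_zero, zero_mul, zero_mul]

theorem rename_sumMap_sigmaX (i : ℕ) (σ : Equiv.Perm (Fin m)) (τ : Fin n → Fin n) :
    rename (Sum.map σ τ) (sigmaX K m n i) = sigmaX K m n i := by
  rw [sigmaX, rename_rename, show Sum.map σ τ ∘ Sum.inl = Sum.inl ∘ σ from rfl, ← rename_rename,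
    rename_esymm]

theorem rename_sumMap_sigmaY (j : ℕ) (σ : Fin m → Fin m) (τ : Equiv.Perm (Fin n)) :
    rename (Sum.map σ τ) (sigmaY K m n j) = sigmaY K m n j := by
  rw [sigmaY, rename_rename, show Sum.map σ τ ∘ Sum.inr = Sum.inr ∘ τ from rfl, ← rename_rename,
    rename_esymm]

theorem sigmaPowSubalgebra_le_supersymmetricSubalgebra [CharP K p] :
    sigmaPowSubalgebra K p m n ≤ supersymmetricSubalgebra K m n := by
  refine Algebra.adjoin_le ?_
  rintro _ (⟨i, -, -, rfl⟩ | ⟨j, -, -, rfl⟩)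
  · exact isSupersymmetric_pow_char fun σ τ => rename_sumMap_sigmaX i σ τ
  · exact isSupersymmetric_pow_char fun σ τ => rename_sumMap_sigmaY j σ τ

theorem sigmaX_eq_esymm (r : ℕ) :
    sigmaX K m n r = (Finset.univ.val.map fun i => X (Sum.inl i)).esymm r := by
  rw [sigmaX, rename_eq_aeval, aeval_esymm_eq_multiset_esymm]
  rfl

theorem sigmaY_eq_esymm (r : ℕ) :
    sigmaY K m n r = (Finset.univ.val.map fun j => X (Sum.inr j)).esymm r := by
  rw [sigmaY, rename_eq_aeval, aeval_esymm_eq_multiset_esymm]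
  rfl

theorem isIntegral_X_sigmaPowSubalgebra [Nontrivial K] [ExpChar K p] (v : Fin m ⊕ Fin n) :
    IsIntegral (sigmaPowSubalgebra K p m n) (X v : MvPolynomial (Fin m ⊕ Fin n) K) := by
  rcases v with i | j
  · refine Multiset.isIntegral_of_esymm_pow_mem (p := p) _ _ (fun r hr hrm => ?_)
      (Multiset.mem_map_of_mem (fun i => X (Sum.inl i)) (Finset.mem_univ_val i))
    rw [← sigmaX_eq_esymm]
    exact Algebra.subset_adjoin (Or.inl ⟨r, hr, by simpa using hrm, rfl⟩)
  · refine Multiset.isIntegral_of_esymm_pow_mem (p := p) _ _ (fun r hr hrn => ?_)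
      (Multiset.mem_map_of_mem (fun j => X (Sum.inr j)) (Finset.mem_univ_val j))
    rw [← sigmaY_eq_esymm]
    exact Algebra.subset_adjoin (Or.inr ⟨r, hr, by simpa using hrn, rfl⟩)

theorem sigmaPowSubalgebra_fg : (sigmaPowSubalgebra K p m n).FG := by
  refine Subalgebra.fg_def.2 ⟨_, Set.Finite.union ?_ ?_, rfl⟩
  · refine ((Set.finite_Icc 1 m).image fun i => sigmaX K m n i ^ p).subset ?_
    rintro _ ⟨i, h₁, h₂, rfl⟩
    exact ⟨i, ⟨h₁, h₂⟩, rfl⟩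
  · refine ((Set.finite_Icc 1 n).image fun j => sigmaY K m n j ^ p).subset ?_
    rintro _ ⟨j, h₁, h₂, rfl⟩
    exact ⟨j, ⟨h₁, h₂⟩, rfl⟩

end Supersymmetric

theorem As_finite_module_over_Bprime_general (K : Type*) [Field K]
    (p : ℕ) [CharP K p] (hp : 2 < p) (m n : ℕ) :
    ∀ Bprime : Subalgebra K (MvPolynomial (Fin m ⊕ Fin n) K),
      Bprime = Algebra.adjoin K
          ({f | ∃ i : ℕ, 1 ≤ i ∧ i ≤ m ∧ f = (sigmaX K m n i) ^ p} ∪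
            {f | ∃ j : ℕ, 1 ≤ j ∧ j ≤ n ∧ f = (sigmaY K m n j) ^ p}) →
      (∀ f ∈ Bprime, IsSupersymmetric K m n f) ∧
      ∃ S : Finset (MvPolynomial (Fin m ⊕ Fin n) K),
        (∀ g ∈ S, IsSupersymmetric K m n g) ∧
        ∀ f : MvPolynomial (Fin m ⊕ Fin n) K, IsSupersymmetric K m n f →
          f ∈ Submodule.span Bprime (S : Set (MvPolynomial (Fin m ⊕ Fin n) K)) := by
  rintro _ rfl
  have : ExpChar K p := ExpChar.prime ((CharP.char_is_prime_or_zero K p).resolve_right (by omega))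
  have hle : sigmaPowSubalgebra K p m n ≤ supersymmetricSubalgebra K m n :=
    sigmaPowSubalgebra_le_supersymmetricSubalgebra
  have : Module.Finite (sigmaPowSubalgebra K p m n) (MvPolynomial (Fin m ⊕ Fin n) K) :=
    .of_adjoin_eq_top_of_isIntegral _ (Set.finite_range X) adjoin_range_X
      fun _ ⟨v, hv⟩ => hv ▸ isIntegral_X_sigmaPowSubalgebra v
  have : Algebra.FiniteType K (sigmaPowSubalgebra K p m n) :=
    (Subalgebra.fg_iff_finiteType _).1 sigmaPowSubalgebra_fg
  have := Algebra.FiniteType.isNoetherianRing K (sigmaPowSubalgebra K p m n)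
  have := isNoetherian_of_isNoetherianRing_of_finite (sigmaPowSubalgebra K p m n)
    (MvPolynomial (Fin m ⊕ Fin n) K)
  obtain ⟨S, hSA, hspan⟩ := Subalgebra.exists_finset_span_of_le hle
  exact ⟨hle, S, hSA, hspan⟩

/-- `A_s(m|n)` contains `B' = K[σ_1(x)^p,…,σ_m(x)^p,σ_1(y)^p,…,σ_n(y)^p]` and is a finitely
generated `B'`-module. -/
theorem As_finite_module_over_Bprime (K : Type*) [Field K] [IsAlgClosed K]
    (p : ℕ) [CharP K p] (hp : 2 < p) (m n : ℕ) (hm : 1 ≤ m) (hn : 1 ≤ n) :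
    ∀ Bprime : Subalgebra K (MvPolynomial (Fin m ⊕ Fin n) K),
      Bprime = Algebra.adjoin K
          ({f | ∃ i : ℕ, 1 ≤ i ∧ i ≤ m ∧ f = (sigmaX K m n i) ^ p} ∪
            {f | ∃ j : ℕ, 1 ≤ j ∧ j ≤ n ∧ f = (sigmaY K m n j) ^ p}) →
      (∀ f ∈ Bprime, IsSupersymmetric K m n f) ∧
      ∃ S : Finset (MvPolynomial (Fin m ⊕ Fin n) K),
        (∀ g ∈ S, IsSupersymmetric K m n g) ∧
        ∀ f : MvPolynomial (Fin m ⊕ Fin n) K, IsSupersymmetric K m n f →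
          f ∈ Submodule.span Bprime (S : Set (MvPolynomial (Fin m ⊕ Fin n) K)) :=
  As_finite_module_over_Bprime_general K p hp m n
end

section
/- Let A be an arbitrary commutative ring and m, n ≥ 1. For every r ≥ 0, substituting x_m = T and y_n = T into the polynomial c_r(x_1,…,x_m | y_1,…,y_n) yields the polynomial c_r(x_1,…,x_{m−1} | y_1,…,y_{n−1}) (formed with m−1 x-variables and n−1 y-variables); in particular the result does not depend on T, so c_r belongs to the algebra of supersymmetric polynomials. -/
/-!
Writing `e_i` for `σ_i` and `t` for a formal variable, `Σ_r c_r t^r = E_x(t) · H_y(-t)` with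
`E_x(t) = Π (1 + x_i t)` and `H_y(t) = Π 1/(1 - y_j t)`. Splitting off the last variables gives
`e_{i+1}(x) = e_{i+1}(x') + x_m e_i(x')` and `h_{j+1}(y) = y_n h_j(y) + h_{j+1}(y')`, so after
`x_m = y_n = T` the factor `E` gains a factor `1 + T t` and the factor `H(-t)` loses one: the
product, hence every `c_r`, is that of the remaining variables.
-/

open MvPolynomial

noncomputable section

/-- The inclusion of `K[x_1,…,x_{m-1},y_1,…,y_{n-1}]` into `K[x_1,…,x_m,y_1,…,y_n]`. -/
def incl (K : Type*) [CommSemiring K] (m n : ℕ) :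
    MvPolynomial (Fin (m - 1) ⊕ Fin (n - 1)) K →ₐ[K] MvPolynomial (Fin m ⊕ Fin n) K :=
  MvPolynomial.rename (Sum.map (Fin.castLE (Nat.sub_le m 1)) (Fin.castLE (Nat.sub_le n 1)))

open Finset

section SymmetricFunctions

variable {R : Type*} [CommSemiring R]

theorem Multiset.esymm_cons_succ (a : R) (s : Multiset R) (i : ℕ) :
    (a ::ₘ s).esymm (i + 1) = s.esymm (i + 1) + a * s.esymm i := by
  simp only [Multiset.esymm, Multiset.powersetCard_cons, Multiset.map_add, Multiset.sum_add,
    Multiset.map_map, Function.comp_def, Multiset.prod_cons, Multiset.sum_map_mul_left]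

theorem MvPolynomial.esymm_eq_zero_of_card_lt {σ : Type*} [Fintype σ] {i : ℕ}
    (h : Fintype.card σ < i) : esymm σ R i = 0 := by
  rw [esymm, Finset.powersetCard_eq_empty.2 (by simpa using h), Finset.sum_empty]

theorem MvPolynomial.esymm_fin_succ {M : ℕ} (i : ℕ) :
    esymm (Fin (M + 1)) R (i + 1) =
      rename Fin.castSucc (esymm (Fin M) R (i + 1))
        + X (Fin.last M) * rename Fin.castSucc (esymm (Fin M) R i) := by
  have hrename (j : ℕ) : rename Fin.castSucc (esymm (Fin M) R j)
      = (Finset.univ.val.map (X ∘ Fin.castSucc)).esymm j := by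
    rw [← aeval_X_left_apply (rename _ _), aeval_rename, aeval_esymm_eq_multiset_esymm]
  have huniv : Finset.univ.val.map (X : Fin (M + 1) → MvPolynomial (Fin (M + 1)) R)
      = X (Fin.last M) ::ₘ Finset.univ.val.map (X ∘ Fin.castSucc) := by
    rw [Fin.univ_castSuccEmb, Finset.cons_val, Multiset.map_cons, Finset.map_val,
      Multiset.map_map]
    rfl
  rw [hrename, hrename, esymm_eq_multiset_esymm, huniv, Multiset.esymm_cons_succ]

theorem MvPolynomial.hsymm_option_succ (α : Type*) [Fintype α] [DecidableEq α] (j : ℕ) :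
    hsymm (Option α) R (j + 1) =
      X none * hsymm (Option α) R j + rename some (hsymm α R (j + 1)) := by
  rw [hsymm, ← (symOptionSuccEquiv (α := α)).symm.sum_comp
    (fun s : Sym (Option α) (j + 1) => (Multiset.map X s.1).prod), Fintype.sum_sum_type]
  congr 1
  · rw [hsymm, Finset.mul_sum]
    refine Finset.sum_congr rfl fun s _ => ?_
    show (Multiset.map X (none ::ₘ (s : Multiset (Option α)))).prod = _
    rw [Multiset.map_cons, Multiset.prod_cons]
    rfl
  · rw [hsymm, map_sum]
    refine Finset.sum_congr rfl fun s _ => ?_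
    show (Multiset.map X ((s.map Function.Embedding.some : Sym (Option α) (j + 1)) :
        Multiset (Option α))).prod = _
    rw [Sym.coe_map, Multiset.map_map, ← Multiset.prod_hom _ (rename (R := R) some),
      Multiset.map_map]
    simp [Function.comp_def]

theorem MvPolynomial.hsymm_fin_succ {N : ℕ} (j : ℕ) :
    hsymm (Fin (N + 1)) R (j + 1) =
      X (Fin.last N) * hsymm (Fin (N + 1)) R j
        + rename Fin.castSucc (hsymm (Fin N) R (j + 1)) := by
  have h := congrArg (rename finSuccEquivLast.symm) (hsymm_option_succ (R := R) (Fin N) j)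
  rw [rename_hsymm, map_add, map_mul, rename_X, rename_rename, rename_hsymm,
    finSuccEquivLast_symm_none] at h
  rw [h]
  congr 3
  exact _root_.funext finSuccEquivLast_symm_some

end SymmetricFunctions

section Telescoping

open PowerSeries

variable {P : Type*} [CommRing P]

theorem PowerSeries.mk_eq_one_add_C_mul_X_mul (T : P) {a A : ℕ → P} (h0 : A 0 = a 0)
    (hsucc : ∀ i, A (i + 1) = a (i + 1) + T * a i) :
    PowerSeries.mk A = (1 + C T * X) * PowerSeries.mk a := by
  ext (_ | i) <;> simp [add_mul, mul_assoc, h0, hsucc]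

theorem PowerSeries.one_add_C_mul_X_mul_mk_alternating (T : P) {b H : ℕ → P} (h0 : H 0 = b 0)
    (hsucc : ∀ j, H (j + 1) = T * H j + b (j + 1)) :
    (1 + C T * X) * PowerSeries.mk (fun j => (-1) ^ j * H j)
      = PowerSeries.mk (fun j => (-1) ^ j * b j) := by
  ext (_ | j)
  · simp [h0]
  · simp [add_mul, mul_assoc, hsucc, pow_succ]
    ring

theorem sum_antidiagonal_alternating_eq_of_recurrence (T : P) {a b A H : ℕ → P}
    (hA0 : A 0 = a 0) (hA : ∀ i, A (i + 1) = a (i + 1) + T * a i)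
    (hH0 : H 0 = b 0) (hH : ∀ j, H (j + 1) = T * H j + b (j + 1)) (r : ℕ) :
    ∑ p ∈ antidiagonal r, (-1) ^ p.2 * A p.1 * H p.2
      = ∑ p ∈ antidiagonal r, (-1) ^ p.2 * a p.1 * b p.2 := by
  have hcoeff (u v : ℕ → P) : ∑ p ∈ antidiagonal r, (-1) ^ p.2 * u p.1 * v p.2
      = coeff r (PowerSeries.mk u * PowerSeries.mk (fun j => (-1) ^ j * v j)) := by
    rw [PowerSeries.coeff_mul]
    exact Finset.sum_congr rfl fun p _ => by simp only [coeff_mk]; ring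
  rw [hcoeff, hcoeff, PowerSeries.mk_eq_one_add_C_mul_X_mul T hA0 hA, mul_comm (1 + _),
    mul_assoc, PowerSeries.one_add_C_mul_X_mul_mk_alternating T hH0 hH]

end Telescoping

section Cpoly

variable (K : Type*) [CommRing K]

theorem cpoly_eq_sum_antidiagonal (m n r : ℕ) :
    cpoly K m n r = ∑ p ∈ antidiagonal r, (-1) ^ p.2 *
      rename Sum.inl (esymm (Fin m) K p.1) * rename Sum.inr (hsymm (Fin n) K p.2) := by
  rw [Nat.sum_antidiagonal_eq_sum_range_succ (fun i j => (-1) ^ j *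
    rename Sum.inl (esymm (Fin m) K i) * rename Sum.inr (hsymm (Fin n) K j)), cpoly]
  refine sum_subset (range_subset_range.2 (by omega)) fun i hir him => ?_
  simp only [mem_range, not_lt] at hir him
  rw [esymm_eq_zero_of_card_lt (by simp; omega), map_zero, mul_zero, zero_mul]

theorem map_cpoly {P : Type*} [CommRing P] [Algebra K P] {m n : ℕ}
    (φ : MvPolynomial (Fin m ⊕ Fin n) K →ₐ[K] P) (r : ℕ) :
    φ (cpoly K m n r) = ∑ p ∈ antidiagonal r, (-1) ^ p.2 *
      φ (rename Sum.inl (esymm (Fin m) K p.1)) * φ (rename Sum.inr (hsymm (Fin n) K p.2)) := by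
  simp only [cpoly_eq_sum_antidiagonal, map_sum, map_mul, map_pow, map_neg, map_one]

theorem rename_perm_inl_cpoly {m n : ℕ} (σ : Equiv.Perm (Fin m)) (r : ℕ) :
    rename (Sum.map σ id) (cpoly K m n r) = cpoly K m n r := by
  rw [map_cpoly, cpoly_eq_sum_antidiagonal]
  refine sum_congr rfl fun p _ => ?_
  rw [rename_rename, rename_rename]
  change _ * rename (Sum.inl ∘ σ) _ * rename Sum.inr _ = _
  rw [← rename_rename, rename_esymm]

theorem rename_perm_inr_cpoly {m n : ℕ} (τ : Equiv.Perm (Fin n)) (r : ℕ) :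
    rename (Sum.map id τ) (cpoly K m n r) = cpoly K m n r := by
  rw [map_cpoly, cpoly_eq_sum_antidiagonal]
  refine sum_congr rfl fun p _ => ?_
  rw [rename_rename, rename_rename]
  change _ * rename Sum.inl _ * rename (Sum.inr ∘ τ) _ = _
  rw [← rename_rename, rename_hsymm]

end Cpoly

section Substitution

theorem psiSub_incl (K : Type*) [CommSemiring K] (m n : ℕ)
    (p : MvPolynomial (Fin (m - 1) ⊕ Fin (n - 1)) K) :
    psiSub K m n (incl K m n p) = Polynomial.C (incl K m n p) := by
  have hcomp : (psiSub K m n).comp (incl K m n) = Polynomial.CAlgHom.comp (incl K m n) := by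
    refine MvPolynomial.algHom_ext fun v => ?_
    rcases v with i | j
    · simp [psiSub, incl, Nat.ne_of_lt i.2]
    · simp [psiSub, incl, Nat.ne_of_lt j.2]
  exact AlgHom.congr_fun hcomp p

variable (K : Type*) [CommRing K] (M N : ℕ)

theorem rename_inl_rename_castSucc (p : MvPolynomial (Fin M) K) :
    rename Sum.inl (rename Fin.castSucc p) = incl K (M + 1) (N + 1) (rename Sum.inl p) := by
  rw [incl, rename_rename, rename_rename]
  rfl

theorem rename_inr_rename_castSucc (p : MvPolynomial (Fin N) K) :
    rename Sum.inr (rename Fin.castSucc p) = incl K (M + 1) (N + 1) (rename Sum.inr p) := by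
  rw [incl, rename_rename, rename_rename]
  rfl

theorem psiSub_rename_inl_esymm_succ (i : ℕ) :
    psiSub K (M + 1) (N + 1) (rename Sum.inl (esymm (Fin (M + 1)) K (i + 1)))
      = Polynomial.C (incl K (M + 1) (N + 1) (rename Sum.inl (esymm (Fin M) K (i + 1))))
        + Polynomial.X *
          Polynomial.C (incl K (M + 1) (N + 1) (rename Sum.inl (esymm (Fin M) K i))) := by
  rw [esymm_fin_succ]
  simp only [map_add, map_mul, rename_X, rename_inl_rename_castSucc, psiSub_incl]
  simp [psiSub]

theorem psiSub_rename_inr_hsymm_succ (j : ℕ) :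
    psiSub K (M + 1) (N + 1) (rename Sum.inr (hsymm (Fin (N + 1)) K (j + 1)))
      = Polynomial.X * psiSub K (M + 1) (N + 1) (rename Sum.inr (hsymm (Fin (N + 1)) K j))
        + Polynomial.C (incl K (M + 1) (N + 1) (rename Sum.inr (hsymm (Fin N) K (j + 1)))) := by
  rw [hsymm_fin_succ]
  simp only [map_add, map_mul, rename_X, rename_inr_rename_castSucc, psiSub_incl]
  simp [psiSub]

theorem psiSub_cpoly (r : ℕ) :
    psiSub K (M + 1) (N + 1) (cpoly K (M + 1) (N + 1) r)
      = Polynomial.C (incl K (M + 1) (N + 1) (cpoly K M N r)) := by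
  let ι : MvPolynomial (Fin M ⊕ Fin N) K →ₐ[K]
      Polynomial (MvPolynomial (Fin (M + 1) ⊕ Fin (N + 1)) K) :=
    Polynomial.CAlgHom.comp (incl K (M + 1) (N + 1))
  rw [map_cpoly]
  refine (sum_antidiagonal_alternating_eq_of_recurrence Polynomial.X
    (A := fun i => psiSub K (M + 1) (N + 1) (rename Sum.inl (esymm (Fin (M + 1)) K i)))
    (a := fun i => ι (rename Sum.inl (esymm (Fin M) K i)))
    (H := fun j => psiSub K (M + 1) (N + 1) (rename Sum.inr (hsymm (Fin (N + 1)) K j)))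
    (b := fun j => ι (rename Sum.inr (hsymm (Fin N) K j)))
    (by simp [ι, esymm_zero]) (psiSub_rename_inl_esymm_succ K M N) (by simp [ι, hsymm_zero])
    (psiSub_rename_inr_hsymm_succ K M N) r).trans (map_cpoly K ι r).symm

end Substitution

/-- Substituting `x_m = y_n = T` into `c_r(x_1,…,x_m|y_1,…,y_n)` yields
`c_r(x_1,…,x_{m-1}|y_1,…,y_{n-1})`; in particular the result does not depend on `T`,
so `c_r` is supersymmetric. -/
theorem cpoly_subst (A : Type*) [CommRing A] (m n : ℕ) (hm : 1 ≤ m) (hn : 1 ≤ n) (r : ℕ) :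
    psiSub A m n (cpoly A m n r) =
      Polynomial.C (incl A m n (cpoly A (m - 1) (n - 1) r)) ∧
    IsSupersymmetric A m n (cpoly A m n r) := by
  obtain ⟨M, rfl⟩ : ∃ M, m = M + 1 := ⟨m - 1, by omega⟩
  obtain ⟨N, rfl⟩ : ∃ N, n = N + 1 := ⟨n - 1, by omega⟩
  have hsubst := psiSub_cpoly A M N r
  exact ⟨hsubst, fun σ => rename_perm_inl_cpoly A σ r, fun τ => rename_perm_inr_cpoly A τ r,
    by rw [hsubst, Polynomial.derivative_C]⟩

end
end
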